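/- arXiv:2411.09657 — 6 statements merged into one kernel-verified Lean document; each statement's English description precedes it below -/
import Mathlib

section
/- Suppose Ĉ: [0,1]^2 → [0,1] is a survival copula such that Ĉ(u,v) is nondecreasing in each argument, τ: [0,∞)^2 → [0,∞) is continuous and nondecreasing in each argument, and for every u,v ≥ 0 one has lim_{t↓0} Ĉ(ut ∧ 1, vt ∧ 1)/(t^κ ℓ(t)) = τ(u,v), where κ ≥ 1 and ℓ is slowly varying at 0. Then for every compact set B ⊂ [0,∞)^2 the convergence is uniform: lim_{t↓0} sup_{(u,v)∈B} |Ĉ(ut,vt)/(t^κ ℓ(t)) − τ(u,v)| = 0. -/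
open Filter Set
open scoped Topology

set_option maxHeartbeats 1000000 in
/-- Uniform convergence on compacts of the tail order limit:
if `Ĉ` is nondecreasing in each argument, `τ` is continuous and nondecreasing in each
argument, `ℓ` is slowly varying at `0`, `κ ≥ 1`, and for every `u,v ≥ 0`
`Ĉ(ut ∧ 1, vt ∧ 1)/(t^κ ℓ(t)) → τ(u,v)` as `t ↓ 0`, then for every compact
`B ⊆ [0,∞)²` the convergence `Ĉ(ut,vt)/(t^κ ℓ(t)) → τ(u,v)` is uniform on `B`. -/
theorem tail_order_uniform_convergence_on_compacts
    (Chat : ℝ → ℝ → ℝ) (τ : ℝ → ℝ → ℝ) (κ : ℝ) (ℓ : ℝ → ℝ)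
    (hκ : 1 ≤ κ)
    (hℓpos : ∀ t : ℝ, 0 < t → 0 < ℓ t)
    (hℓsv : ∀ s : ℝ, 0 < s →
      Tendsto (fun t => ℓ (s * t) / ℓ t) (𝓝[>] (0:ℝ)) (𝓝 1))
    (hChat_mono1 : ∀ v, Monotone fun u => Chat u v)
    (hChat_mono2 : ∀ u, Monotone fun v => Chat u v)
    (hτcont : Continuous fun p : ℝ × ℝ => τ p.1 p.2)
    (hτ_mono1 : ∀ v, Monotone fun u => τ u v)
    (hτ_mono2 : ∀ u, Monotone fun v => τ u v)
    (hlim : ∀ u v : ℝ, 0 ≤ u → 0 ≤ v →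
      Tendsto (fun t => Chat (min (u * t) 1) (min (v * t) 1) / (t ^ κ * ℓ t))
        (𝓝[>] (0:ℝ)) (𝓝 (τ u v))) :
    ∀ B : Set (ℝ × ℝ), IsCompact B → B ⊆ {p : ℝ × ℝ | 0 ≤ p.1 ∧ 0 ≤ p.2} →
      ∀ ε : ℝ, 0 < ε → ∀ᶠ t in 𝓝[>] (0:ℝ), ∀ p ∈ B,
        |Chat (p.1 * t) (p.2 * t) / (t ^ κ * ℓ t) - τ p.1 p.2| < ε := by
  intro B hB hBsub ε hε
  -- bound B
  obtain ⟨R, hR⟩ := hB.isBounded.subset_closedBall 0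
  set M : ℝ := max R 0 with hMdef
  have hM0 : (0:ℝ) ≤ M := le_max_right _ _
  have hBM : ∀ p ∈ B, p.1 ≤ M ∧ p.2 ≤ M := by
    intro p hp
    have h1 := hR hp
    rw [Metric.mem_closedBall, Prod.dist_eq] at h1
    have h2 : dist p.1 (0:ℝ) ≤ R := le_trans (le_max_left _ _) h1
    have h3 : dist p.2 (0:ℝ) ≤ R := le_trans (le_max_right _ _) h1
    rw [Real.dist_eq, sub_zero] at h2 h3
    exact ⟨le_trans (le_trans (le_abs_self _) h2) (le_max_left _ _),
           le_trans (le_trans (le_abs_self _) h3) (le_max_left _ _)⟩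
  -- uniform continuity of τ on a compact box
  have hK : IsCompact (Set.Icc ((0:ℝ),(0:ℝ)) (M+2, M+2)) := isCompact_Icc
  have hUC := (hK.uniformContinuousOn_of_continuous hτcont.continuousOn)
  rw [Metric.uniformContinuousOn_iff] at hUC
  obtain ⟨δ, hδ, hδ'⟩ := hUC (ε/3) (by linarith)
  -- grid mesh
  set c : ℝ := min (δ/2) 1 with hcdef
  have hc : 0 < c := lt_min (by linarith) one_pos
  have hc1 : c ≤ 1 := min_le_right _ _
  have hcδ : c < δ := lt_of_le_of_lt (min_le_left _ _) (by linarith)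
  set N : ℕ := ⌈M / c⌉₊ with hNdef
  have hMN : M ≤ (N:ℝ) * c := by
    have := Nat.le_ceil (M / c)
    calc M = (M / c) * c := (div_mul_cancel₀ _ hc.ne').symm
      _ ≤ (N:ℝ) * c := by
        apply mul_le_mul_of_nonneg_right this hc.le
  have hN2 : ((N:ℝ) + 1) * c ≤ M + 2 := by
    have h1 : (N:ℝ) < M / c + 1 := Nat.ceil_lt_add_one (by positivity)
    have h2 : (N:ℝ) * c ≤ (M / c + 1) * c :=
      mul_le_mul_of_nonneg_right h1.le hc.le
    have h3 : (M / c + 1) * c = M + c := by field_simp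
    nlinarith
  -- grid points converge (finitely many)
  have hgrid : ∀ᶠ t in 𝓝[>] (0:ℝ), ∀ i ∈ Finset.range (N+2), ∀ j ∈ Finset.range (N+2),
      |Chat (min ((i*c) * t) 1) (min ((j*c) * t) 1) / (t ^ κ * ℓ t) - τ (i*c) (j*c)| < ε/3 := by
    rw [Filter.eventually_all_finset]
    intro i _
    rw [Filter.eventually_all_finset]
    intro j _
    have h := Metric.tendsto_nhds.mp
      (hlim ((i:ℝ)*c) ((j:ℝ)*c) (by positivity) (by positivity)) (ε/3) (by linarith)
    simpa [Real.dist_eq] using h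
  have hsmall : ∀ᶠ t in 𝓝[>] (0:ℝ), t < 1 / (((N:ℝ)+1)*c + 1) := by
    have hpos : (0:ℝ) < 1 / (((N:ℝ)+1)*c + 1) := by positivity
    have hmem : Set.Ioo (0:ℝ) (1 / (((N:ℝ)+1)*c + 1)) ∈ 𝓝[>] (0:ℝ) :=
      Ioo_mem_nhdsGT_of_mem (Set.mem_Ico.mpr ⟨le_refl (0:ℝ), hpos⟩)
    filter_upwards [hmem] with t ht
    exact ht.2
  filter_upwards [hgrid, hsmall, self_mem_nhdsWithin] with t hgt hts ht0
  have ht0' : (0:ℝ) < t := ht0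
  intro p hp
  obtain ⟨hu0, hv0⟩ := hBsub hp
  obtain ⟨huM, hvM⟩ := hBM p hp
  set u := p.1 with hu
  set v := p.2 with hv
  have hD : 0 < t ^ κ * ℓ t := mul_pos (Real.rpow_pos_of_pos ht0' κ) (hℓpos t ht0')
  set i : ℕ := ⌊u / c⌋₊ with hidef
  set j : ℕ := ⌊v / c⌋₊ with hjdef
  have hiu : (i:ℝ)*c ≤ u := by
    have h := Nat.floor_le (show (0:ℝ) ≤ u/c by positivity)
    calc (i:ℝ)*c ≤ (u/c)*c := mul_le_mul_of_nonneg_right h hc.le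
      _ = u := div_mul_cancel₀ _ hc.ne'
  have hui : u ≤ ((i:ℝ)+1)*c := by
    have h := (Nat.lt_floor_add_one (u/c)).le
    calc u = (u/c)*c := (div_mul_cancel₀ _ hc.ne').symm
      _ ≤ ((i:ℝ)+1)*c := mul_le_mul_of_nonneg_right h hc.le
  have hjv : (j:ℝ)*c ≤ v := by
    have h := Nat.floor_le (show (0:ℝ) ≤ v/c by positivity)
    calc (j:ℝ)*c ≤ (v/c)*c := mul_le_mul_of_nonneg_right h hc.le
      _ = v := div_mul_cancel₀ _ hc.ne'
  have hvj : v ≤ ((j:ℝ)+1)*c := by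
    have h := (Nat.lt_floor_add_one (v/c)).le
    calc v = (v/c)*c := (div_mul_cancel₀ _ hc.ne').symm
      _ ≤ ((j:ℝ)+1)*c := mul_le_mul_of_nonneg_right h hc.le
  have hiN : i ≤ N := by
    have h1 : u / c ≤ M / c := by gcongr
    exact le_trans (Nat.floor_le_floor h1) (Nat.floor_le_ceil _)
  have hjN : j ≤ N := by
    have h1 : v / c ≤ M / c := by gcongr
    exact le_trans (Nat.floor_le_floor h1) (Nat.floor_le_ceil _)
  -- all relevant products are ≤ 1
  have ht1 : (((N:ℝ)+1)*c) * t ≤ 1 := by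
    have hX : (0:ℝ) ≤ ((N:ℝ)+1)*c := by positivity
    have h1 : (((N:ℝ)+1)*c) * t ≤ (((N:ℝ)+1)*c) * (1/(((N:ℝ)+1)*c+1)) :=
      mul_le_mul_of_nonneg_left hts.le hX
    have h2 : (((N:ℝ)+1)*c) * (1/(((N:ℝ)+1)*c+1)) ≤ 1 := by
      rw [mul_one_div, div_le_one (by positivity)]
      linarith
    linarith
  have hile : ((i:ℝ)+1)*c ≤ ((N:ℝ)+1)*c := by
    have : (i:ℝ) ≤ N := Nat.cast_le.mpr hiN
    nlinarith
  have hjle : ((j:ℝ)+1)*c ≤ ((N:ℝ)+1)*c := by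
    have : (j:ℝ) ≤ N := Nat.cast_le.mpr hjN
    nlinarith
  have ha't : (((i:ℝ)+1)*c) * t ≤ 1 :=
    le_trans (mul_le_mul_of_nonneg_right hile ht0'.le) ht1
  have hb't : (((j:ℝ)+1)*c) * t ≤ 1 :=
    le_trans (mul_le_mul_of_nonneg_right hjle ht0'.le) ht1
  have hat : ((i:ℝ)*c) * t ≤ 1 :=
    le_trans (by nlinarith : ((i:ℝ)*c)*t ≤ (((i:ℝ)+1)*c)*t) ha't
  have hbt : ((j:ℝ)*c) * t ≤ 1 :=
    le_trans (by nlinarith : ((j:ℝ)*c)*t ≤ (((j:ℝ)+1)*c)*t) hb't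
  have hut : u * t ≤ 1 := le_trans (mul_le_mul_of_nonneg_right hui ht0'.le) ha't
  have hvt : v * t ≤ 1 := le_trans (mul_le_mul_of_nonneg_right hvj ht0'.le) hb't
  -- grid estimates at (i,j) and (i+1, j+1)
  have hG1 := hgt (i+1) (Finset.mem_range.mpr (by omega)) (j+1) (Finset.mem_range.mpr (by omega))
  have hG2 := hgt i (Finset.mem_range.mpr (by omega)) j (Finset.mem_range.mpr (by omega))
  rw [min_eq_left (by push_cast; linarith), min_eq_left (by push_cast; linarith)] at hG1
  rw [min_eq_left hat, min_eq_left hbt] at hG2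
  push_cast at hG1
  -- uniform continuity across one cell
  have hmem1 : (((i:ℝ)+1)*c, ((j:ℝ)+1)*c) ∈ Set.Icc ((0:ℝ),(0:ℝ)) (M+2, M+2) := by
    constructor <;> constructor <;> simp <;> [positivity; positivity; linarith; linarith]
  have hmem2 : ((i:ℝ)*c, (j:ℝ)*c) ∈ Set.Icc ((0:ℝ),(0:ℝ)) (M+2, M+2) := by
    constructor <;> constructor <;> simp <;> [positivity; positivity; nlinarith; nlinarith]
  have hUCest := hδ' _ hmem1 _ hmem2 (by
    rw [Prod.dist_eq]
    simp only [Real.dist_eq]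
    have h1 : ((i:ℝ)+1)*c - (i:ℝ)*c = c := by ring
    have h2 : ((j:ℝ)+1)*c - (j:ℝ)*c = c := by ring
    rw [h1, h2, abs_of_pos hc, max_self]
    exact hcδ)
  simp only [Real.dist_eq] at hUCest
  -- monotonicity bounds
  have hChain1 : Chat (u*t) (v*t) ≤ Chat ((((i:ℝ)+1)*c)*t) ((((j:ℝ)+1)*c)*t) := by
    calc Chat (u*t) (v*t) ≤ Chat ((((i:ℝ)+1)*c)*t) (v*t) :=
          hChat_mono1 _ (mul_le_mul_of_nonneg_right hui ht0'.le)
      _ ≤ Chat ((((i:ℝ)+1)*c)*t) ((((j:ℝ)+1)*c)*t) :=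
          hChat_mono2 _ (mul_le_mul_of_nonneg_right hvj ht0'.le)
  have hChain2 : Chat (((i:ℝ)*c)*t) (((j:ℝ)*c)*t) ≤ Chat (u*t) (v*t) := by
    calc Chat (((i:ℝ)*c)*t) (((j:ℝ)*c)*t) ≤ Chat (u*t) (((j:ℝ)*c)*t) :=
          hChat_mono1 _ (mul_le_mul_of_nonneg_right hiu ht0'.le)
      _ ≤ Chat (u*t) (v*t) :=
          hChat_mono2 _ (mul_le_mul_of_nonneg_right hjv ht0'.le)
  have hdiv1 : Chat (u*t) (v*t) / (t ^ κ * ℓ t)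
      ≤ Chat ((((i:ℝ)+1)*c)*t) ((((j:ℝ)+1)*c)*t) / (t ^ κ * ℓ t) := by gcongr
  have hdiv2 : Chat (((i:ℝ)*c)*t) (((j:ℝ)*c)*t) / (t ^ κ * ℓ t)
      ≤ Chat (u*t) (v*t) / (t ^ κ * ℓ t) := by gcongr
  have hτ1 : τ ((i:ℝ)*c) ((j:ℝ)*c) ≤ τ u v :=
    le_trans (hτ_mono1 _ hiu) (hτ_mono2 _ hjv)
  have hτ2 : τ u v ≤ τ (((i:ℝ)+1)*c) (((j:ℝ)+1)*c) :=
    le_trans (hτ_mono1 _ hui) (hτ_mono2 _ hvj)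
  rw [abs_lt] at hG1 hG2 hUCest ⊢
  constructor <;> [nlinarith; nlinarith]
end

section
/- Suppose Ĉ and τ are differentiable in the second variable, and for all u,v ≥ 0 one has Ĉ(ut,vt)/(t^κ ℓ(t)) → τ(u,v) as t↓0, where ℓ is slowly varying at 0. If for each fixed t the function v ↦ ∂Ĉ/∂v(ut, vt)·t is the derivative of v ↦ Ĉ(ut,vt), and ∂Ĉ/∂v(u,v) is nondecreasing in u and nonincreasing in v, then for all u > 0 and v > 0, lim_{t↓0} Ĉ_v(ut, vt)/(t^{κ−1} ℓ(t)) = τ_v(u,v), where Ĉ_v and τ_v denote the partial derivatives with respect to the second argument. -/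
open Filter Set
open scoped Topology

/-!
For `t > 0` the map `w ↦ Ĉ(ut, wt) / (t^κ ℓ(t))` is concave, because its derivative
`Ĉ_v(ut, wt) / (t^{κ-1} ℓ(t))` is antitone in `w`, and it converges pointwise to `τ(u, ·)`.
For concave functions the derivative at `v` lies between the secant slopes to the left and to
the right of `v`; these converge to the secant slopes of `τ(u, ·)`, which in turn approach
`τ_v(u, v)` as the secant shrinks.
-/

lemma concaveOn_univ_of_hasDerivAt_of_antitone {f f' : ℝ → ℝ}
    (hf : ∀ x, HasDerivAt f (f' x) x) (hf' : Antitone f') : ConcaveOn ℝ univ f := by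
  have hderiv : deriv f = f' := funext fun x => (hf x).deriv
  exact Antitone.concaveOn_univ_of_deriv (fun x => (hf x).differentiableAt) (hderiv ▸ hf')

lemma Filter.Tendsto.slope {ι : Type*} {l : Filter ι} {F : ι → ℝ → ℝ} {f : ℝ → ℝ} {x y : ℝ}
    (hx : Tendsto (fun i => F i x) l (𝓝 (f x))) (hy : Tendsto (fun i => F i y) l (𝓝 (f y))) :
    Tendsto (fun i => slope (F i) x y) l (𝓝 (slope f x y)) := by
  simp only [slope_def_field]
  exact (hy.sub hx).div_const _

theorem tendsto_hasDerivAt_of_tendsto_of_concaveOn {ι : Type*} {l : Filter ι} {F : ι → ℝ → ℝ}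
    {D : ι → ℝ} {f : ℝ → ℝ} {S : Set ℝ} {v f' : ℝ} (hS : S ∈ 𝓝 v)
    (hconc : ∀ᶠ i in l, ConcaveOn ℝ S (F i)) (hD : ∀ᶠ i in l, HasDerivAt (F i) (D i) v)
    (hconv : ∀ᶠ w in 𝓝 v, Tendsto (fun i => F i w) l (𝓝 (f w))) (hf : HasDerivAt f f' v) :
    Tendsto D l (𝓝 f') := by
  have hslope := hasDerivAt_iff_tendsto_slope.1 hf
  have hnear : ∀ᶠ w in 𝓝[≠] v, w ∈ S ∧ Tendsto (fun i => F i w) l (𝓝 (f w)) :=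
    nhdsWithin_le_nhds ((show ∀ᶠ w in 𝓝 v, w ∈ S from hS).and hconv)
  have hv := hconv.self_of_nhds
  rw [tendsto_order]
  constructor
  · intro a ha
    obtain ⟨w, ⟨hfw, hwS, hw⟩, hvw⟩ := (((hslope.eventually (eventually_gt_nhds ha)).and
      hnear).filter_mono (nhdsWithin_mono v (s := Ioi v) fun _ h => ne_of_gt h) |>.and
      self_mem_nhdsWithin).exists
    filter_upwards [(hv.slope hw).eventually (eventually_gt_nhds hfw), hconc, hD]
      with i hi hconci hDi
    exact hi.trans_le (hconci.slope_le_of_hasDerivAt (mem_of_mem_nhds hS) hwS hvw hDi)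
  · intro b hb
    obtain ⟨w, ⟨hfw, hwS, hw⟩, hwv⟩ := (((hslope.eventually (eventually_lt_nhds hb)).and
      hnear).filter_mono (nhdsWithin_mono v (s := Iio v) fun _ h => ne_of_lt h) |>.and
      self_mem_nhdsWithin).exists
    filter_upwards [(hv.slope hw).eventually (eventually_lt_nhds hfw), hconc, hD]
      with i hi hconci hDi
    rw [slope_comm] at hi
    exact (hconci.le_slope_of_hasDerivAt hwS (mem_of_mem_nhds hS) hwv hDi).trans_lt hi

theorem tail_order_derivative_convergence_general
    (Chat Cv τ τv : ℝ → ℝ → ℝ) (κ : ℝ) (ℓ : ℝ → ℝ)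
    (hℓpos : ∀ t : ℝ, 0 < t → 0 < ℓ t)
    (hlim : ∀ u v : ℝ, 0 ≤ u → 0 ≤ v →
      Tendsto (fun t => Chat (u * t) (v * t) / (t ^ κ * ℓ t)) (𝓝[>] (0:ℝ)) (𝓝 (τ u v)))
    (hCv : ∀ u : ℝ, ∀ t : ℝ, 0 < t → ∀ v : ℝ,
      HasDerivAt (fun w => Chat (u * t) (w * t)) (Cv (u * t) (v * t) * t) v)
    (hτv : ∀ u v : ℝ, HasDerivAt (fun w => τ u w) (τv u v) v)
    (hCv_anti : ∀ u, Antitone fun v => Cv u v) :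
    ∀ u : ℝ, 0 < u → ∀ v : ℝ, 0 < v →
      Tendsto (fun t => Cv (u * t) (v * t) / (t ^ (κ - 1) * ℓ t))
        (𝓝[>] (0:ℝ)) (𝓝 (τv u v)) := by
  intro u hu v hv
  have hscale : ∀ t : ℝ, 0 < t → 0 < t ^ κ * ℓ t := fun t ht =>
    mul_pos (Real.rpow_pos_of_pos ht κ) (hℓpos t ht)
  have hderiv : ∀ t : ℝ, 0 < t → ∀ w : ℝ,
      HasDerivAt (fun w => Chat (u * t) (w * t) / (t ^ κ * ℓ t))
        (Cv (u * t) (w * t) * t / (t ^ κ * ℓ t)) w := fun t ht w =>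
    (hCv u t ht w).div_const _
  have hconc : ∀ t : ℝ, 0 < t →
      ConcaveOn ℝ univ fun w => Chat (u * t) (w * t) / (t ^ κ * ℓ t) := fun t ht =>
    concaveOn_univ_of_hasDerivAt_of_antitone (hderiv t ht) fun a b hab =>
      div_le_div_of_nonneg_right (mul_le_mul_of_nonneg_right
        (hCv_anti _ (mul_le_mul_of_nonneg_right hab ht.le)) ht.le) (hscale t ht).le
  have hrescale : ∀ t : ℝ, 0 < t → Cv (u * t) (v * t) * t / (t ^ κ * ℓ t)
      = Cv (u * t) (v * t) / (t ^ (κ - 1) * ℓ t) := fun t ht => by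
    rw [Real.rpow_sub_one ht.ne', div_mul_eq_mul_div, div_div_eq_mul_div]
  refine (tendsto_hasDerivAt_of_tendsto_of_concaveOn univ_mem
    (eventually_mem_nhdsWithin.mono hconc) (eventually_mem_nhdsWithin.mono fun t ht =>
      hderiv t ht v) ?_ (hτv u v)).congr' (eventually_mem_nhdsWithin.mono hrescale)
  filter_upwards [eventually_gt_nhds hv] with w hw
  exact hlim u w hu.le hw.le

/-- Convergence of the tail order limit passes to partial derivatives:
if `Ĉ(ut,vt)/(t^κ ℓ(t)) → τ(u,v)` as `t ↓ 0`, the map `v ↦ Ĉ_v(ut,vt)·t` is the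
derivative of `v ↦ Ĉ(ut,vt)`, `τ_v` is the partial derivative of `τ` in its second
argument, and `Ĉ_v(u,v)` is nondecreasing in `u` and nonincreasing in `v`, then for
all `u > 0`, `v > 0`, `Ĉ_v(ut,vt)/(t^{κ-1} ℓ(t)) → τ_v(u,v)` as `t ↓ 0`. -/
theorem tail_order_derivative_convergence
    (Chat Cv τ τv : ℝ → ℝ → ℝ) (κ : ℝ) (ℓ : ℝ → ℝ)
    (hκ : κ ∈ Icc (1:ℝ) 2)
    (hℓpos : ∀ t : ℝ, 0 < t → 0 < ℓ t)
    (hℓsv : ∀ s : ℝ, 0 < s →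
      Tendsto (fun t => ℓ (s * t) / ℓ t) (𝓝[>] (0:ℝ)) (𝓝 1))
    (hlim : ∀ u v : ℝ, 0 ≤ u → 0 ≤ v →
      Tendsto (fun t => Chat (u * t) (v * t) / (t ^ κ * ℓ t)) (𝓝[>] (0:ℝ)) (𝓝 (τ u v)))
    (hCv : ∀ u : ℝ, ∀ t : ℝ, 0 < t → ∀ v : ℝ,
      HasDerivAt (fun w => Chat (u * t) (w * t)) (Cv (u * t) (v * t) * t) v)
    (hτv : ∀ u v : ℝ, HasDerivAt (fun w => τ u w) (τv u v) v)
    (hCv_mono : ∀ v, Monotone fun u => Cv u v)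
    (hCv_anti : ∀ u, Antitone fun v => Cv u v) :
    ∀ u : ℝ, 0 < u → ∀ v : ℝ, 0 < v →
      Tendsto (fun t => Cv (u * t) (v * t) / (t ^ (κ - 1) * ℓ t))
        (𝓝[>] (0:ℝ)) (𝓝 (τv u v)) :=
  tail_order_derivative_convergence_general Chat Cv τ τv κ ℓ hℓpos hlim hCv hτv hCv_anti
end

section
/- Suppose there exist θ ≥ 1, a slowly varying function h at 0, and a function φ on (0,∞)×(0,1] such that lim_{t↓0} Ĉ_v(ut, v)/(t^θ h(t)) = φ(u,v) for all u > 0 and 0 < v ≤ 1, where Ĉ_v is the partial derivative of the survival copula Ĉ with respect to its second argument. Then φ(u,v) = u^θ φ(1,v) for all u > 0 and 0 < v ≤ 1. -/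
open Filter Set
open scoped Topology

/-- If `Ĉ_v(ut, v)/(t^θ h(t)) → φ(u,v)` as `t ↓ 0` for all `u > 0` and
`0 < v ≤ 1`, with `θ ≥ 1` and `h` slowly varying at `0`, then
`φ(u,v) = u^θ φ(1,v)` for all `u > 0` and `0 < v ≤ 1`. -/
theorem phi_homogeneous_in_first_argument
    (Cv : ℝ → ℝ → ℝ) (φ : ℝ → ℝ → ℝ) (θ : ℝ) (h : ℝ → ℝ)
    (hθ : 1 ≤ θ)
    (hhpos : ∀ t : ℝ, 0 < t → 0 < h t)
    (hhsv : ∀ s : ℝ, 0 < s →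
      Tendsto (fun t => h (s * t) / h t) (𝓝[>] (0:ℝ)) (𝓝 1))
    (hlim : ∀ u : ℝ, 0 < u → ∀ v : ℝ, 0 < v → v ≤ 1 →
      Tendsto (fun t => Cv (u * t) v / (t ^ θ * h t)) (𝓝[>] (0:ℝ)) (𝓝 (φ u v))) :
    ∀ u : ℝ, 0 < u → ∀ v : ℝ, 0 < v → v ≤ 1 → φ u v = u ^ θ * φ 1 v := by
  intro u hu v hv hv1
  -- map t ↦ u*t sends 𝓝[>]0 to 𝓝[>]0
  have hmap : Tendsto (fun t : ℝ => u * t) (𝓝[>] (0:ℝ)) (𝓝[>] (0:ℝ)) := by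
    have h0 : Tendsto (fun t : ℝ => u * t) (𝓝 (0:ℝ)) (𝓝 (0:ℝ)) := by
      simpa using (continuous_id.tendsto (0:ℝ)).const_mul u
    refine tendsto_nhdsWithin_of_tendsto_nhds_of_eventually_within _
      (h0.mono_left nhdsWithin_le_nhds) ?_
    filter_upwards [self_mem_nhdsWithin] with t ht using mul_pos hu ht
  have h1 : Tendsto (fun t => Cv (1 * (u * t)) v / ((u * t) ^ θ * h (u * t)))
      (𝓝[>] (0:ℝ)) (𝓝 (φ 1 v)) :=
    (hlim 1 one_pos v hv hv1).comp hmap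
  have h2 : Tendsto (fun t => h (u * t) / h t) (𝓝[>] (0:ℝ)) (𝓝 1) := hhsv u hu
  have h3 : Tendsto (fun t =>
      (Cv (1 * (u * t)) v / ((u * t) ^ θ * h (u * t))) * u ^ θ * (h (u * t) / h t))
      (𝓝[>] (0:ℝ)) (𝓝 (φ 1 v * u ^ θ * 1)) :=
    (h1.mul_const _).mul h2
  have heq : ∀ᶠ t in 𝓝[>] (0:ℝ),
      (Cv (1 * (u * t)) v / ((u * t) ^ θ * h (u * t))) * u ^ θ * (h (u * t) / h t)
        = Cv (u * t) v / (t ^ θ * h t) := by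
    filter_upwards [self_mem_nhdsWithin] with t ht
    have ht : (0:ℝ) < t := ht
    have hut : (0:ℝ) < u * t := mul_pos hu ht
    have hpow : (u * t) ^ θ = u ^ θ * t ^ θ :=
      Real.mul_rpow hu.le ht.le
    rw [one_mul, hpow]
    have h1' : h (u * t) ≠ 0 := (hhpos _ hut).ne'
    have h2' : h t ≠ 0 := (hhpos _ ht).ne'
    have hu' : u ^ θ ≠ 0 := (Real.rpow_pos_of_pos hu θ).ne'
    have ht' : t ^ θ ≠ 0 := (Real.rpow_pos_of_pos ht θ).ne'
    field_simp
  have h4 : Tendsto (fun t => Cv (u * t) v / (t ^ θ * h t)) (𝓝[>] (0:ℝ))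
      (𝓝 (φ 1 v * u ^ θ * 1)) := h3.congr' heq
  have := tendsto_nhds_unique (hlim u hu v hv hv1) h4
  rw [this]; ring
end

section
/- Let F̄ ∈ RV_{−α} with α > 0 and let τ be a continuously differentiable tail order function on [0,∞)^2 whose partial derivative τ_v(u,v) is nondecreasing in u. For 0 < δ < 1/2 define D(δ,t) = ∫_δ^{1/2} (τ_v((1−y)^{−α}, y^{−α}) − τ_v(1, y^{−α})) dF(ty). If the Lebesgue measure of { y ∈ [δ, 1/2] : τ_v((1−y)^{−α}, y^{−α}) > τ_v(1, y^{−α}) } is positive, then lim_{t→∞} D(δ,t)/F̄(t) = α ∫_δ^{1/2} (τ_v((1−y)^{−α}, y^{−α}) − τ_v(1, y^{−α})) y^{−α−1} dy, and this limit is strictly positive and finite. -/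
/-!
After the substitution `x = t y`, `D(δ,t)/F̄(t)` is the integral of the continuous function
`g y = τ_v((1-y)^{-α}, y^{-α}) - τ_v(1, y^{-α})` over `(δ, 1/2]` against the measure
`F̄(t)⁻¹ dF(t y)`. By regular variation this measure gives each interval `(c, d] ⊆ (0, ∞)`
the mass `(F̄(ct) - F̄(dt))/F̄(t) → c^{-α} - d^{-α}`, which is the mass of `α y^{-α-1} dy`.
Approximating the uniformly continuous `g` by step functions on a fine partition of `[δ, 1/2]`
turns this into convergence of the integrals. The limit is positive because `g ≥ 0`
(as `(1-y)^{-α} ≥ 1` and `τ_v` is monotone in its first argument) and `g > 0` on a set of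
positive measure.
-/

open Filter Set MeasureTheory
open scoped Topology

section StepApproximation

variable {μ : Measure ℝ} {g : ℝ → ℝ} {z : ℕ → ℝ} {n : ℕ}

lemma Monotone.Ioc_succ_subset_Ioc (hz : Monotone z) {k : ℕ} (hk : k < n) :
    Ioc (z k) (z (k + 1)) ⊆ Ioc (z 0) (z n) :=
  Ioc_subset_Ioc (hz k.zero_le) (hz hk)

lemma setIntegral_Ioc_eq_sum (hz : Monotone z) (hg : IntegrableOn g (Ioc (z 0) (z n)) μ) :
    ∫ x in Ioc (z 0) (z n), g x ∂μ
      = ∑ k ∈ Finset.range n, ∫ x in Ioc (z k) (z (k + 1)), g x ∂μ := by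
  rw [← intervalIntegral.integral_of_le (hz n.zero_le),
    ← intervalIntegral.sum_integral_adjacent_intervals fun k hk =>
      (intervalIntegrable_iff_integrableOn_Ioc_of_le (hz k.le_succ)).2
        (hg.mono_set (hz.Ioc_succ_subset_Ioc hk))]
  exact Finset.sum_congr rfl fun k _ => intervalIntegral.integral_of_le (hz k.le_succ)

lemma measureReal_Ioc_eq_sum (hz : Monotone z) (hμ : μ (Ioc (z 0) (z n)) ≠ ⊤) :
    μ.real (Ioc (z 0) (z n)) = ∑ k ∈ Finset.range n, μ.real (Ioc (z k) (z (k + 1))) := by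
  simpa using setIntegral_Ioc_eq_sum (g := fun _ => (1 : ℝ)) hz (integrableOn_const hμ)

lemma abs_setIntegral_sub_sum_le {c : ℕ → ℝ} {ε : ℝ} (hz : Monotone z)
    (hμ : μ (Ioc (z 0) (z n)) ≠ ⊤) (hg : IntegrableOn g (Ioc (z 0) (z n)) μ)
    (hc : ∀ k < n, ∀ x ∈ Ioc (z k) (z (k + 1)), |g x - c k| ≤ ε) :
    |∫ x in Ioc (z 0) (z n), g x ∂μ
        - ∑ k ∈ Finset.range n, c k * μ.real (Ioc (z k) (z (k + 1)))|
      ≤ ε * μ.real (Ioc (z 0) (z n)) := by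
  have hcell : ∀ k ∈ Finset.range n,
      |∫ x in Ioc (z k) (z (k + 1)), g x ∂μ - c k * μ.real (Ioc (z k) (z (k + 1)))|
        ≤ ε * μ.real (Ioc (z k) (z (k + 1))) := by
    intro k hk
    have hk := Finset.mem_range.1 hk
    have hfin : μ (Ioc (z k) (z (k + 1))) < ⊤ :=
      (measure_mono (hz.Ioc_succ_subset_Ioc hk)).trans_lt hμ.lt_top
    rw [mul_comm, ← smul_eq_mul, ← setIntegral_const,
      ← integral_sub (hg.mono_set (hz.Ioc_succ_subset_Ioc hk)) (integrableOn_const hfin.ne)]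
    exact norm_setIntegral_le_of_norm_le_const hfin fun x hx =>
      (Real.norm_eq_abs _).trans_le (hc k hk x hx)
  rw [setIntegral_Ioc_eq_sum hz hg, measureReal_Ioc_eq_sum hz hμ, Finset.mul_sum,
    ← Finset.sum_sub_distrib]
  exact (Finset.abs_sum_le_sum_abs _ _).trans (Finset.sum_le_sum hcell)

end StepApproximation

lemma ContinuousOn.exists_partition_abs_sub_le {g : ℝ → ℝ} {a b ε : ℝ} (hab : a ≤ b)
    (hg : ContinuousOn g (Icc a b)) (hε : 0 < ε) :
    ∃ (n : ℕ) (z : ℕ → ℝ), Monotone z ∧ z 0 = a ∧ z n = b ∧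
      ∀ k < n, ∀ x ∈ Ioc (z k) (z (k + 1)), |g x - g (z (k + 1))| ≤ ε := by
  obtain ⟨η, hη, hUC⟩ := Metric.uniformContinuousOn_iff.1
    (isCompact_Icc.uniformContinuousOn_of_continuous hg) ε hε
  obtain ⟨n, hn⟩ := exists_nat_gt ((b - a) / η)
  have hn0 : (0 : ℝ) < n := (div_nonneg (sub_nonneg.2 hab) hη.le).trans_lt hn
  set h := (b - a) / n
  have hh : 0 ≤ h := div_nonneg (sub_nonneg.2 hab) hn0.le
  have hhη : h < η := by rw [div_lt_iff₀ hn0]; rwa [div_lt_iff₀ hη, mul_comm] at hn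
  have hz : Monotone fun k : ℕ => a + k * h := fun i j hij => by
    have : (i : ℝ) ≤ j := Nat.cast_le.2 hij
    simp only; nlinarith
  have hzn : a + n * h = b := by simp only [h]; field_simp; ring
  refine ⟨n, fun k => a + k * h, hz, by simp, hzn, fun k hk x hx => ?_⟩
  have hmem : ∀ j ≤ n, a + j * h ∈ Icc a b := fun j hj =>
    ⟨le_add_of_nonneg_right (mul_nonneg j.cast_nonneg hh), hzn ▸ hz hj⟩
  have hx' : x ∈ Icc a b := ⟨(hmem k hk.le).1.trans hx.1.le, hx.2.trans (hmem (k + 1) hk).2⟩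
  refine (hUC x hx' _ (hmem (k + 1) hk) ?_).le
  rw [Real.dist_eq, abs_of_nonpos (by linarith [hx.2])]
  push_cast at hx ⊢
  linarith [hx.1]

lemma ContinuousOn.integrableOn_Ioc_of_measure_ne_top {μ : Measure ℝ} {g : ℝ → ℝ}
    {a b : ℝ} (hg : ContinuousOn g (Icc a b)) (hμ : μ (Ioc a b) ≠ ⊤) :
    IntegrableOn g (Ioc a b) μ := by
  obtain ⟨C, hC⟩ := isCompact_Icc.exists_bound_of_continuousOn hg
  have : IsFiniteMeasure (μ.restrict (Ioc a b)) := isFiniteMeasure_restrict.2 hμ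
  exact Integrable.of_bound
    ((hg.mono Ioc_subset_Icc_self).aestronglyMeasurable measurableSet_Ioc) C
    ((ae_restrict_iff' measurableSet_Ioc).2
      (ae_of_all _ fun x hx => hC x (Ioc_subset_Icc_self hx)))

theorem tendsto_setIntegral_Ioc_of_tendsto_measureReal_Ioc {ι : Type*} {l : Filter ι}
    {μ : ι → Measure ℝ} {ν : Measure ℝ} {a b : ℝ} (hab : a ≤ b)
    (hμ : ∀ᶠ i in l, μ i (Ioc a b) ≠ ⊤) (hν : ν (Ioc a b) ≠ ⊤)
    (hlim : ∀ c d, a ≤ c → c ≤ d → d ≤ b →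
      Tendsto (fun i => (μ i).real (Ioc c d)) l (𝓝 (ν.real (Ioc c d))))
    {g : ℝ → ℝ} (hg : ContinuousOn g (Icc a b)) :
    Tendsto (fun i => ∫ x in Ioc a b, g x ∂μ i) l (𝓝 (∫ x in Ioc a b, g x ∂ν)) := by
  rw [Metric.tendsto_nhds]
  intro ε hε
  set K := ν.real (Ioc a b)
  have hK : 0 ≤ K := measureReal_nonneg
  set ε' := ε / (4 * (K + 1))
  have hε' : 0 < ε' := by positivity
  have hmass : ∀ᶠ i in l, (μ i).real (Ioc a b) < K + 1 :=
    (hlim a b le_rfl hab le_rfl).eventually_lt_const (lt_add_one K)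
  obtain ⟨n, z, hz, rfl, rfl, hosc⟩ := hg.exists_partition_abs_sub_le hab hε'
  have hsum : Tendsto
      (fun i => ∑ k ∈ Finset.range n, g (z (k + 1)) * (μ i).real (Ioc (z k) (z (k + 1)))) l
      (𝓝 (∑ k ∈ Finset.range n, g (z (k + 1)) * ν.real (Ioc (z k) (z (k + 1))))) :=
    tendsto_finsetSum _ fun k hk =>
      (hlim _ _ (hz k.zero_le) (hz k.le_succ) (hz (Finset.mem_range.1 hk))).const_mul _
  have hlimit :=
    abs_setIntegral_sub_sum_le hz hν (hg.integrableOn_Ioc_of_measure_ne_top hν) hosc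
  filter_upwards [hμ, hmass, Metric.tendsto_nhds.1 hsum (ε / 2) (half_pos hε)]
    with i hμi hmi hsi
  have happrox :=
    abs_setIntegral_sub_sum_le hz hμi (hg.integrableOn_Ioc_of_measure_ne_top hμi) hosc
  rw [Real.dist_eq] at hsi ⊢
  have hεK : ε' * (K + 1) + ε' * K < ε / 2 := by
    have : ε' * (4 * (K + 1)) = ε := div_mul_cancel₀ _ (by positivity)
    nlinarith
  have hμK : ε' * (μ i).real (Ioc (z 0) (z n)) ≤ ε' * (K + 1) :=
    mul_le_mul_of_nonneg_left hmi.le hε'.le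
  obtain ⟨h₁, h₁'⟩ := abs_le.1 happrox
  obtain ⟨h₂, h₂'⟩ := abs_lt.1 hsi
  obtain ⟨h₃, h₃'⟩ := abs_le.1 hlimit
  rw [abs_lt]
  constructor <;> linarith

/-- The measure `F̄(t)⁻¹ dF(t y)` in the variable `y`. -/
noncomputable def scaledTailMeasure (F : StieltjesFunction ℝ) (t : ℝ) : Measure ℝ :=
  ENNReal.ofReal (1 - F t)⁻¹ • F.measure.map (· / t)

section ScaledTailMeasure

variable {F : StieltjesFunction ℝ} {t : ℝ}

lemma preimage_div_const_Ioc_of_pos (ht : 0 < t) (c d : ℝ) :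
    (· / t) ⁻¹' Ioc c d = Ioc (c * t) (d * t) := by
  ext x
  simp [div_le_iff₀ ht, lt_div_iff₀ ht]

lemma measurableEmbedding_div_const (ht : t ≠ 0) : MeasurableEmbedding (· / t) := by
  simpa only [div_eq_mul_inv] using measurableEmbedding_mulRight₀ (inv_ne_zero ht)

lemma scaledTailMeasure_Ioc (ht : 0 < t) (hFt : F t ≤ 1) (c d : ℝ) :
    scaledTailMeasure F t (Ioc c d) = ENNReal.ofReal ((F (d * t) - F (c * t)) / (1 - F t)) := by
  rw [scaledTailMeasure, Measure.smul_apply, Measure.map_apply (measurable_div_const t)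
    measurableSet_Ioc, preimage_div_const_Ioc_of_pos ht, F.measure_Ioc, smul_eq_mul,
    ← ENNReal.ofReal_mul (inv_nonneg.2 (sub_nonneg.2 hFt)), div_eq_inv_mul]

lemma setIntegral_scaledTailMeasure (ht : 0 < t) (hFt : F t ≤ 1) (g : ℝ → ℝ) (c d : ℝ) :
    ∫ y in Ioc c d, g y ∂scaledTailMeasure F t
      = (∫ x in Ioc (c * t) (d * t), g (x / t) ∂F.measure) / (1 - F t) := by
  rw [scaledTailMeasure, Measure.restrict_smul, integral_smul_measure,
    (measurableEmbedding_div_const ht.ne').setIntegral_map, preimage_div_const_Ioc_of_pos ht,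
    ENNReal.toReal_ofReal (inv_nonneg.2 (sub_nonneg.2 hFt)), smul_eq_mul, div_eq_inv_mul]

lemma tendsto_scaledTailMeasure_real_Ioc {α : ℝ} (hFle : ∀ t, F t ≤ 1)
    (hRV : ∀ x : ℝ, 0 < x →
      Tendsto (fun t => (1 - F (x * t)) / (1 - F t)) atTop (𝓝 (x ^ (-α))))
    {c d : ℝ} (hc : 0 < c) (hcd : c ≤ d) :
    Tendsto (fun t => (scaledTailMeasure F t).real (Ioc c d)) atTop
      (𝓝 (c ^ (-α) - d ^ (-α))) := by
  refine ((hRV c hc).sub (hRV d (hc.trans_le hcd))).congr' ?_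
  filter_upwards [eventually_gt_atTop 0] with t ht
  have hmono : F (c * t) ≤ F (d * t) := F.mono (mul_le_mul_of_nonneg_right hcd ht.le)
  rw [measureReal_def, scaledTailMeasure_Ioc ht (hFle t), ENNReal.toReal_ofReal
    (div_nonneg (sub_nonneg.2 hmono) (sub_nonneg.2 (hFle t))), div_sub_div_same]
  ring_nf

end ScaledTailMeasure

noncomputable def powerLawMeasure (α : ℝ) : Measure ℝ :=
  (volume.restrict (Ioi 0)).withDensity fun y => ENNReal.ofReal (α * y ^ (-α - 1))

section PowerLawMeasure

variable {α c d : ℝ}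

lemma integrableOn_rpow_Ioc (hc : 0 < c) (r : ℝ) :
    IntegrableOn (fun y : ℝ => y ^ r) (Ioc c d) :=
  ((continuousOn_id.rpow_const fun _ hy => Or.inl (hc.trans_le hy.1).ne').integrableOn_Icc).mono_set
    Ioc_subset_Icc_self

lemma restrict_Ioc_restrict_Ioi {μ : Measure ℝ} (hc : 0 ≤ c) :
    (μ.restrict (Ioi 0)).restrict (Ioc c d) = μ.restrict (Ioc c d) := by
  rw [Measure.restrict_restrict measurableSet_Ioc,
    inter_eq_left.2 (Ioc_subset_Ioi_self.trans (Ioi_subset_Ioi hc))]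

lemma powerLawMeasure_Ioc_lt_top (hc : 0 < c) : powerLawMeasure α (Ioc c d) < ⊤ := by
  rw [powerLawMeasure, withDensity_apply _ measurableSet_Ioc, restrict_Ioc_restrict_Ioi hc.le]
  exact ((integrableOn_rpow_Ioc hc _).const_mul α).lintegral_lt_top

lemma setIntegral_powerLawMeasure (hα : 0 ≤ α) (hc : 0 ≤ c) (g : ℝ → ℝ) :
    ∫ y in Ioc c d, g y ∂powerLawMeasure α = α * ∫ y in Ioc c d, g y * y ^ (-α - 1) := by
  rw [powerLawMeasure, setIntegral_withDensity_eq_setIntegral_toReal_smul (by fun_prop)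
    (ae_of_all _ fun _ => ENNReal.ofReal_lt_top) _ measurableSet_Ioc,
    restrict_Ioc_restrict_Ioi hc, ← integral_const_mul]
  refine setIntegral_congr_fun measurableSet_Ioc fun y hy => ?_
  rw [ENNReal.toReal_ofReal (mul_nonneg hα (Real.rpow_nonneg (hc.trans hy.1.le) _)), smul_eq_mul]
  ring

lemma powerLawMeasure_real_Ioc (hα : 0 < α) (hc : 0 < c) (hcd : c ≤ d) :
    (powerLawMeasure α).real (Ioc c d) = c ^ (-α) - d ^ (-α) := by
  have h := setIntegral_powerLawMeasure (d := d) hα.le hc.le fun _ => 1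
  rw [setIntegral_const, smul_eq_mul, mul_one] at h
  rw [h, ← intervalIntegral.integral_of_le hcd]
  simp_rw [one_mul]
  rw [integral_rpow (Or.inr ⟨by linarith, by
      rw [uIcc_of_le hcd]; exact fun h0 => (not_le.2 hc) h0.1⟩),
    show -α - 1 + 1 = -α by ring]
  field_simp
  ring

end PowerLawMeasure

lemma setIntegral_pos_of_measure_setOf_pos {X : Type*} [MeasurableSpace X] {μ : Measure X}
    {f : X → ℝ} {s : Set X} (hs : MeasurableSet s) (hf : IntegrableOn f s μ)
    (h0 : ∀ x ∈ s, 0 ≤ f x) (hpos : 0 < μ {x ∈ s | 0 < f x}) :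
    0 < ∫ x in s, f x ∂μ := by
  rw [setIntegral_pos_iff_support_of_nonneg_ae ((ae_restrict_iff' hs).2 (ae_of_all _ h0)) hf]
  exact hpos.trans_le (measure_mono fun x hx => ⟨hx.2.ne', hx.1⟩)

section TailOrderIncrement

variable {τv : ℝ → ℝ → ℝ} {α : ℝ}

lemma continuousOn_tailOrder_increment (hτv : Continuous fun p : ℝ × ℝ => τv p.1 p.2) :
    ContinuousOn (fun y => τv ((1 - y) ^ (-α)) (y ^ (-α)) - τv 1 (y ^ (-α))) (Ioo 0 1) := by
  have hpow : ContinuousOn (fun y : ℝ => y ^ (-α)) (Ioo 0 1) :=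
    continuousOn_id.rpow_const fun _ hy => Or.inl hy.1.ne'
  have hpow' : ContinuousOn (fun y : ℝ => (1 - y) ^ (-α)) (Ioo 0 1) :=
    (continuousOn_const.sub continuousOn_id).rpow_const fun _ hy => Or.inl (sub_ne_zero.2 hy.2.ne')
  exact (hτv.comp_continuousOn (hpow'.prodMk hpow)).sub
    (hτv.comp_continuousOn (continuousOn_const.prodMk hpow))

lemma tailOrder_increment_nonneg (hτv : ∀ v, Monotone fun u => τv u v) (hα : 0 ≤ α)
    {y : ℝ} (hy : y ∈ Ico 0 1) : 0 ≤ τv ((1 - y) ^ (-α)) (y ^ (-α)) - τv 1 (y ^ (-α)) :=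
  sub_nonneg.2 <| hτv _ <|
    Real.one_le_rpow_of_pos_of_le_one_of_nonpos (by linarith [hy.2]) (by linarith [hy.1])
      (by linarith)

end TailOrderIncrement

theorem D_delta_t_asymptotics_general
    (F : StieltjesFunction ℝ) (α : ℝ) (hα : 0 < α)
    (hFbar_pos : ∀ t : ℝ, F t < 1)
    (hRV : ∀ x : ℝ, 0 < x →
      Tendsto (fun t => (1 - F (x * t)) / (1 - F t)) atTop (𝓝 (x ^ (-α))))
    (τv : ℝ → ℝ → ℝ)
    (hτv_cont : Continuous fun p : ℝ × ℝ => τv p.1 p.2)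
    (hτv_mono : ∀ v, Monotone fun u => τv u v)
    (δ : ℝ) (hδ : 0 < δ) (hδ' : δ < 1 / 2)
    (hpos : 0 < volume {y ∈ Icc δ (1 / 2) |
      τv 1 (y ^ (-α)) < τv ((1 - y) ^ (-α)) (y ^ (-α))}) :
    Tendsto (fun t =>
        (∫ x in Ioc (δ * t) (t / 2),
          (τv ((1 - x / t) ^ (-α)) ((x / t) ^ (-α)) - τv 1 ((x / t) ^ (-α)))
            ∂F.measure) / (1 - F t))
      atTop
      (𝓝 (α * ∫ y in Ioc δ (1 / 2),
        (τv ((1 - y) ^ (-α)) (y ^ (-α)) - τv 1 (y ^ (-α))) * y ^ (-α - 1))) ∧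
    0 < α * ∫ y in Ioc δ (1 / 2),
        (τv ((1 - y) ^ (-α)) (y ^ (-α)) - τv 1 (y ^ (-α))) * y ^ (-α - 1) ∧
    IntegrableOn
      (fun y => (τv ((1 - y) ^ (-α)) (y ^ (-α)) - τv 1 (y ^ (-α))) * y ^ (-α - 1))
      (Ioc δ (1 / 2)) := by
  set g := fun y => τv ((1 - y) ^ (-α)) (y ^ (-α)) - τv 1 (y ^ (-α))
  have hsub : Icc δ (1 / 2) ⊆ Ioo 0 1 := fun y hy => ⟨hδ.trans_le hy.1, by linarith [hy.2]⟩
  have hg : ContinuousOn g (Icc δ (1 / 2)) :=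
    (continuousOn_tailOrder_increment hτv_cont).mono hsub
  have hint : IntegrableOn (fun y => g y * y ^ (-α - 1)) (Icc δ (1 / 2)) :=
    (hg.mul (continuousOn_id.rpow_const fun _ hy => Or.inl (hsub hy).1.ne')).integrableOn_Icc
  refine ⟨?_, mul_pos hα ?_, hint.mono_set Ioc_subset_Icc_self⟩
  · have hlim := tendsto_setIntegral_Ioc_of_tendsto_measureReal_Ioc (μ := scaledTailMeasure F)
      hδ'.le ((eventually_gt_atTop 0).mono fun t ht => by
        simp [scaledTailMeasure_Ioc ht (hFbar_pos t).le])
      (powerLawMeasure_Ioc_lt_top hδ).ne (fun c d hc hcd _ => by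
        rw [powerLawMeasure_real_Ioc hα (hδ.trans_le hc) hcd]
        exact tendsto_scaledTailMeasure_real_Ioc (fun t => (hFbar_pos t).le) hRV
          (hδ.trans_le hc) hcd)
      hg
    rw [setIntegral_powerLawMeasure hα.le hδ.le] at hlim
    refine hlim.congr' ((eventually_gt_atTop 0).mono fun t ht => ?_)
    rw [setIntegral_scaledTailMeasure ht (hFbar_pos t).le, one_div_mul_eq_div]
  · rw [setIntegral_congr_set Ioc_ae_eq_Icc]
    refine setIntegral_pos_of_measure_setOf_pos measurableSet_Icc hint (fun y hy => ?_)
      (hpos.trans_le (measure_mono fun y hy => ⟨hy.1, ?_⟩))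
    · exact mul_nonneg
        (tailOrder_increment_nonneg hτv_mono hα.le ⟨(hsub hy).1.le, (hsub hy).2⟩)
        (Real.rpow_nonneg (hsub hy).1.le _)
    · exact mul_pos (sub_pos.2 hy.2) (Real.rpow_pos_of_pos (hsub hy.1).1 _)

/-- Asymptotics of `D(δ,t) = ∫_δ^{1/2} (τ_v((1-y)^{-α},y^{-α}) -
τ_v(1,y^{-α})) dF(ty)` (written as `∫_{δt}^{t/2} g(x/t) dF(x)`): if `F̄ = 1-F ∈ RV_{-α}`,
`τ_v` is continuous and nondecreasing in its first argument, and the set where the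
integrand is strictly positive has positive Lebesgue measure, then
`D(δ,t)/F̄(t) → α ∫_δ^{1/2} g(y) y^{-α-1} dy`, a strictly positive finite limit. -/
theorem D_delta_t_asymptotics
    (F : StieltjesFunction ℝ) (α : ℝ) (hα : 0 < α)
    (hF0 : ∀ x : ℝ, x < 0 → F x = 0)
    (hFtop : Tendsto (fun t => F t) atTop (𝓝 1))
    (hFcont : Continuous fun t => F t)
    (hFbar_pos : ∀ t : ℝ, F t < 1)
    (hRV : ∀ x : ℝ, 0 < x →
      Tendsto (fun t => (1 - F (x * t)) / (1 - F t)) atTop (𝓝 (x ^ (-α))))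
    (τv : ℝ → ℝ → ℝ)
    (hτv_cont : Continuous fun p : ℝ × ℝ => τv p.1 p.2)
    (hτv_mono : ∀ v, Monotone fun u => τv u v)
    (δ : ℝ) (hδ : 0 < δ) (hδ' : δ < 1 / 2)
    (hpos : 0 < volume {y ∈ Icc δ (1 / 2) |
      τv 1 (y ^ (-α)) < τv ((1 - y) ^ (-α)) (y ^ (-α))}) :
    Tendsto (fun t =>
        (∫ x in Ioc (δ * t) (t / 2),
          (τv ((1 - x / t) ^ (-α)) ((x / t) ^ (-α)) - τv 1 ((x / t) ^ (-α)))
            ∂F.measure) / (1 - F t))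
      atTop
      (𝓝 (α * ∫ y in Ioc δ (1 / 2),
        (τv ((1 - y) ^ (-α)) (y ^ (-α)) - τv 1 (y ^ (-α))) * y ^ (-α - 1))) ∧
    0 < α * ∫ y in Ioc δ (1 / 2),
        (τv ((1 - y) ^ (-α)) (y ^ (-α)) - τv 1 (y ^ (-α))) * y ^ (-α - 1) ∧
    IntegrableOn
      (fun y => (τv ((1 - y) ^ (-α)) (y ^ (-α)) - τv 1 (y ^ (-α))) * y ^ (-α - 1))
      (Ioc δ (1 / 2)) :=
  D_delta_t_asymptotics_general F α hα hFbar_pos hRV τv hτv_cont hτv_mono δ hδ hδ' hpos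
end

section
/- Let A be a differentiable Pickands dependence function and Ĉ(u,v) = exp(−A(−log u, −log v)). If 0 ≤ A_2(1,y) ≤ 1 for all y ≥ 0, then for all 0 < t < 1 and 0 < v ≤ 1, Ĉ_v(t,v)/t ≤ v^{A_2(1,0)−1}, where Ĉ_v = ∂Ĉ/∂v and A_2 = ∂A/∂v. In particular t ↦ exp(log t · (A(1, log v / log t) − 1)) is nonincreasing on (0,1) with limit v^{A_2(1,0)} as t ↓ 0. -/
open Filter Set Real
open scoped Topology

/-!
Write `φ = A 1`. Homogeneity gives `A s x = s * φ (x / s)`, and with `s = -log t`, `x = -log v`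
the exponent `log t * (φ (log v / log t) - 1)` equals `log v * slope φ 0 (log v / log t)`.
As `t` increases in `(0, 1)`, `log v / log t ≥ 0` increases, so by convexity of `φ` the slope
increases and, since `log v ≤ 0`, the exponent decreases; as `t ↓ 0` the slope tends to
`φ' 0 = A2 0`. So the exponential factor is bounded by its limit `v ^ A2 0`, and
`Ĉ_v(t, v) / t` is that factor times `A2 (x / s) / v ≤ 1 / v`.
-/

lemma ConvexOn.comp_prodMk_left {𝕜 E F β : Type*} [Semiring 𝕜] [PartialOrder 𝕜]
    [AddCommMonoid E] [AddCommMonoid F] [AddCommMonoid β] [PartialOrder β] [Module 𝕜 E]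
    [Module 𝕜 F] [SMul 𝕜 β] {s : Set E} {t : Set F} {f : E × F → β}
    (hf : ConvexOn 𝕜 (s ×ˢ t) f) {a : E} (ha : a ∈ s) (ht : Convex 𝕜 t) :
    ConvexOn 𝕜 t fun y => f (a, y) := by
  refine ⟨ht, fun x hx y hy p q hp hq hpq => ?_⟩
  simpa [Convex.combo_self hpq] using hf.2 (mk_mem_prod ha hx) (mk_mem_prod ha hy) hp hq hpq

lemma AntitoneOn.le_of_tendsto_nhdsGT {α β : Type*} [TopologicalSpace α] [LinearOrder α]
    [OrderTopology α] [TopologicalSpace β] [Preorder β] [OrderClosedTopology β]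
    {f : α → β} {a b t : α} {L : β} [(𝓝[>] a).NeBot] (hf : AntitoneOn f (Ioo a b))
    (hL : Tendsto f (𝓝[>] a) (𝓝 L)) (ht : t ∈ Ioo a b) : f t ≤ L :=
  ge_of_tendsto hL <| by
    filter_upwards [Ioo_mem_nhdsGT ht.1] with s hs using hf ⟨hs.1, hs.2.trans ht.2⟩ ht hs.2.le

lemma HasDerivWithinAt.hasDerivAt_of_differentiableAt {𝕜 F : Type*} [NontriviallyNormedField 𝕜]
    [NormedAddCommGroup F] [NormedSpace 𝕜 F] {f : 𝕜 → F} {f' : F} {s : Set 𝕜} {x : 𝕜}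
    (h : HasDerivWithinAt f f' s x) (hf : DifferentiableAt 𝕜 f x)
    (hs : UniqueDiffWithinAt 𝕜 s x) : HasDerivAt f f' x := by
  rw [← h.derivWithin hs, hf.derivWithin hs]
  exact hf.hasDerivAt

lemma mul_sub_apply_zero_eq_mul_slope (φ : ℝ → ℝ) (a b : ℝ) :
    b * (φ (a / b) - φ 0) = a * slope φ 0 (a / b) := by
  rcases eq_or_ne a 0 with rfl | ha
  · simp
  rcases eq_or_ne b 0 with rfl | hb
  · simp
  rw [slope_def_field, sub_zero]
  field_simp

section Slope

variable {φ : ℝ → ℝ}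

lemma antitoneOn_log_mul_sub_apply_zero (hφ : ConvexOn ℝ (Ici 0) φ) {c : ℝ} (hc : c ≤ 0) :
    AntitoneOn (fun t => log t * (φ (c / log t) - φ 0)) (Ioo 0 1) := by
  rcases hc.eq_or_lt with rfl | hc
  · simp [AntitoneOn]
  intro t₁ ht₁ t₂ ht₂ ht
  have hlog₁ := log_neg ht₁.1 ht₁.2
  have hlog₂ := log_neg ht₂.1 ht₂.2
  simp only [mul_sub_apply_zero_eq_mul_slope]
  refine mul_le_mul_of_nonpos_left (hφ.slope_mono self_mem_Ici ?_ ?_ ?_) hc.le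
  · exact ⟨(div_pos_of_neg_of_neg hc hlog₁).le, (div_pos_of_neg_of_neg hc hlog₁).ne'⟩
  · exact ⟨(div_pos_of_neg_of_neg hc hlog₂).le, (div_pos_of_neg_of_neg hc hlog₂).ne'⟩
  · simpa only [div_eq_mul_one_div c] using
      mul_le_mul_of_nonpos_left (one_div_le_one_div_of_neg_of_le hlog₂ (log_le_log ht₁.1 ht)) hc.le

lemma tendsto_log_mul_sub_apply_zero {d : ℝ} (hφ : HasDerivAt φ d 0) (c : ℝ) :
    Tendsto (fun t => log t * (φ (c / log t) - φ 0)) (𝓝[>] 0) (𝓝 (c * d)) := by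
  rcases eq_or_ne c 0 with rfl | hc
  · simp
  simp only [mul_sub_apply_zero_eq_mul_slope]
  refine (hasDerivAt_iff_tendsto_slope.1 hφ).comp ?_ |>.const_mul c
  refine tendsto_nhdsWithin_iff.2 ⟨tendsto_const_nhds.div_atBot tendsto_log_nhdsGT_zero, ?_⟩
  filter_upwards [Ioo_mem_nhdsGT one_pos] with t ht
  exact div_ne_zero hc (log_neg ht.1 ht.2).ne

end Slope

section Homogeneous

variable {A : ℝ → ℝ → ℝ} {A2 : ℝ → ℝ} {s x : ℝ}

lemma eq_mul_apply_one_div_of_homogeneous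
    (hhomog : ∀ c : ℝ, 0 ≤ c → ∀ u v : ℝ, 0 ≤ u → 0 ≤ v → A (c * u) (c * v) = c * A u v)
    (hs : 0 < s) (hx : 0 ≤ x) : A s x = s * A 1 (x / s) := by
  simpa [mul_div_cancel₀ x hs.ne'] using hhomog s hs.le 1 (x / s) zero_le_one (by positivity)

lemma hasDerivAt_right_of_homogeneous
    (hhomog : ∀ c : ℝ, 0 ≤ c → ∀ u v : ℝ, 0 ≤ u → 0 ≤ v → A (c * u) (c * v) = c * A u v)
    (hdiff : Differentiable ℝ fun p : ℝ × ℝ => A p.1 p.2)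
    (hA2 : ∀ y : ℝ, 0 ≤ y → HasDerivAt (A 1) (A2 y) y) (hs : 0 < s) (hx : 0 ≤ x) :
    HasDerivAt (A s) (A2 (x / s)) x := by
  -- Homogeneity only pins `A s` down on `[0, ∞)`; differentiability of `A` makes the one-sided
  -- derivative at `x = 0` a two-sided one.
  have hscaled : HasDerivAt (fun w => s * A 1 (w / s)) (A2 (x / s)) x := by
    have hinner : HasDerivAt (fun w => w / s) (1 / s) x := (hasDerivAt_id' x).div_const s
    have h := ((hA2 _ (by positivity)).comp x hinner).const_mul s
    rwa [mul_one_div, mul_div_cancel₀ _ hs.ne'] at h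
  refine HasDerivWithinAt.hasDerivAt_of_differentiableAt (s := Ici 0) ?_ (by fun_prop)
    (uniqueDiffOn_Ici 0 x hx)
  exact hscaled.hasDerivWithinAt.congr
    (fun w hw => eq_mul_apply_one_div_of_homogeneous hhomog hs hw)
    (eq_mul_apply_one_div_of_homogeneous hhomog hs hx)

lemma deriv_exp_neg_comp_neg_log_of_homogeneous
    (hhomog : ∀ c : ℝ, 0 ≤ c → ∀ u v : ℝ, 0 ≤ u → 0 ≤ v → A (c * u) (c * v) = c * A u v)
    (hdiff : Differentiable ℝ fun p : ℝ × ℝ => A p.1 p.2)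
    (hA2 : ∀ y : ℝ, 0 ≤ y → HasDerivAt (A 1) (A2 y) y) {C : ℝ → ℝ} {v : ℝ}
    (hC : ∀ w, 0 < w → C w = exp (-A s (-log w))) (hs : 0 < s) (hv : 0 < v) (hv1 : v ≤ 1) :
    deriv C v = exp (-A s (-log v)) * A2 (-log v / s) / v := by
  have hx : 0 ≤ -log v := neg_nonneg.2 (log_nonpos hv.le hv1)
  have hA := hasDerivAt_right_of_homogeneous hhomog hdiff hA2 hs hx
  have hCv : C =ᶠ[𝓝 v] fun w => exp (-A s (-log w)) := by
    filter_upwards [eventually_gt_nhds hv] with w hw using hC w hw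
  have hd : HasDerivAt (fun w => exp (-A s (-log w)))
      (exp (-A s (-log v)) * -(A2 (-log v / s) * -v⁻¹)) v :=
    (hA.comp v (hasDerivAt_log hv.ne').neg).neg.exp
  rw [hCv.deriv_eq, hd.deriv]
  field_simp

lemma exp_neg_div_eq_of_homogeneous
    (hhomog : ∀ c : ℝ, 0 ≤ c → ∀ u v : ℝ, 0 ≤ u → 0 ≤ v → A (c * u) (c * v) = c * A u v)
    {t v : ℝ} (ht : t ∈ Ioo 0 1) (hv : 0 < v) (hv1 : v ≤ 1) :
    exp (-A (-log t) (-log v)) / t = exp (log t * (A 1 (log v / log t) - 1)) := by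
  have hs : 0 < -log t := neg_pos.2 (log_neg ht.1 ht.2)
  have hx : 0 ≤ -log v := neg_nonneg.2 (log_nonpos hv.le hv1)
  rw [eq_mul_apply_one_div_of_homogeneous hhomog hs hx, neg_div_neg_eq, div_eq_mul_inv,
    ← exp_log (inv_pos.2 ht.1), log_inv, ← exp_add]
  ring_nf

end Homogeneous

/-- For an extreme value copula `Ĉ(u,v) = exp(-A(-log u, -log v))` with a
differentiable Pickands dependence function `A` satisfying `0 ≤ A_2(1,y) ≤ 1` for all
`y ≥ 0`, one has `Ĉ_v(t,v)/t ≤ v^{A_2(1,0)-1}` for all `0 < t < 1` and `0 < v ≤ 1`.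
Moreover `t ↦ exp(log t · (A(1, log v/log t) - 1))` is nonincreasing on `(0,1)` with
limit `v^{A_2(1,0)}` as `t ↓ 0`. -/
theorem extreme_value_copula_Cv_bound
    (A : ℝ → ℝ → ℝ)
    (hconvex : ConvexOn ℝ (Ici (0:ℝ) ×ˢ Ici (0:ℝ)) fun p : ℝ × ℝ => A p.1 p.2)
    (hhomog : ∀ c : ℝ, 0 ≤ c → ∀ u v : ℝ, 0 ≤ u → 0 ≤ v → A (c * u) (c * v) = c * A u v)
    (hbound : ∀ u v : ℝ, 0 ≤ u → 0 ≤ v → max u v ≤ A u v ∧ A u v ≤ u + v)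
    (hdiff : Differentiable ℝ fun p : ℝ × ℝ => A p.1 p.2)
    (A2 : ℝ → ℝ) (hA2 : ∀ y : ℝ, 0 ≤ y → HasDerivAt (fun w => A 1 w) (A2 y) y)
    (hA2bound : ∀ y : ℝ, 0 ≤ y → A2 y ∈ Icc (0:ℝ) 1)
    (Chat : ℝ → ℝ → ℝ)
    (hChat : ∀ u v : ℝ, 0 < u → 0 < v →
      Chat u v = Real.exp (-A (-Real.log u) (-Real.log v))) :
    (∀ t : ℝ, 0 < t → t < 1 → ∀ v : ℝ, 0 < v → v ≤ 1 →
      deriv (fun w => Chat t w) v / t ≤ v ^ (A2 0 - 1)) ∧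
    (∀ v : ℝ, 0 < v → v ≤ 1 →
      AntitoneOn (fun t => Real.exp (Real.log t * (A 1 (Real.log v / Real.log t) - 1)))
        (Ioo (0:ℝ) 1) ∧
      Tendsto (fun t => Real.exp (Real.log t * (A 1 (Real.log v / Real.log t) - 1)))
        (𝓝[>] (0:ℝ)) (𝓝 (v ^ A2 0))) := by
  have hφ : ConvexOn ℝ (Ici 0) (A 1) :=
    hconvex.comp_prodMk_left (mem_Ici.2 zero_le_one) (convex_Ici 0)
  have hφ0 : A 1 0 = 1 := by
    have := hbound 1 0 zero_le_one le_rfl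
    norm_num at this
    linarith
  have hmono (v : ℝ) (hv : 0 < v) (hv1 : v ≤ 1) :
      AntitoneOn (fun t => exp (log t * (A 1 (log v / log t) - 1))) (Ioo 0 1) ∧
      Tendsto (fun t => exp (log t * (A 1 (log v / log t) - 1))) (𝓝[>] 0) (𝓝 (v ^ A2 0)) := by
    have hanti := antitoneOn_log_mul_sub_apply_zero hφ (log_nonpos hv.le hv1)
    have hlim := tendsto_log_mul_sub_apply_zero (hA2 0 le_rfl) (log v)
    rw [hφ0] at hanti hlim
    exact ⟨exp_monotone.comp_antitoneOn hanti, rpow_def_of_pos hv _ ▸ hlim.rexp⟩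
  refine ⟨fun t ht ht1 v hv hv1 => ?_, hmono⟩
  have hs : 0 < -log t := neg_pos.2 (log_neg ht ht1)
  have hA2v := hA2bound (-log v / -log t) (div_nonneg (neg_nonneg.2 (log_nonpos hv.le hv1)) hs.le)
  have hexp : exp (-A (-log t) (-log v)) / t ≤ v ^ A2 0 := by
    rw [exp_neg_div_eq_of_homogeneous hhomog ⟨ht, ht1⟩ hv hv1]
    exact (hmono v hv hv1).1.le_of_tendsto_nhdsGT (hmono v hv hv1).2 ⟨ht, ht1⟩
  calc deriv (fun w => Chat t w) v / t
      = exp (-A (-log t) (-log v)) / t * A2 (-log v / -log t) / v := by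
        rw [deriv_exp_neg_comp_neg_log_of_homogeneous hhomog hdiff hA2 (hChat t · ht) hs hv hv1]
        ring
    _ ≤ v ^ A2 0 * 1 / v := by gcongr; exacts [hA2v.1, hA2v.2]
    _ = v ^ (A2 0 - 1) := by rw [mul_one, rpow_sub_one hv.ne']
end

section
/- For the Gumbel copula Ĉ(u,v) = exp(−((−log u)^φ + (−log v)^φ)^{1/φ}) with φ ≥ 1, the tail order is κ = 2^{1/φ} and the tail order function is τ(u,v) = (uv)^{2^{1/φ−1}}; i.e., for all u,v ≥ 0, lim_{t↓0} Ĉ(ut,vt)/t^{2^{1/φ}} = (uv)^{2^{1/φ−1}}. -/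
open Filter Real
open scoped Topology

/-!
Writing `s = -log t`, `a = -log u`, `b = -log v` and `A(x, y) = (x^φ + y^φ)^(1/φ)`, one has
`Ĉ(ut, vt) / t^A(1,1) = exp (-(A(s + a, s + b) - A(1, 1) s))`. Since `A` is positively
homogeneous, `A(s + a, s + b) - A(1, 1) s` is a difference quotient of `h ↦ A(1 + ah, 1 + bh)`
at `h = 1/s`, so as `t ↓ 0` it tends to the directional derivative `2^(1/φ-1) (a + b)` of `A`
at `(1, 1)`, and `exp (-2^(1/φ-1) (a + b)) = (uv)^(2^(1/φ-1))`.
-/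

/-- The Pickands function of the Gumbel copula: `Ĉ(u, v) = exp (-A(-log u, -log v))`. -/
noncomputable def gumbelPickands (φ x y : ℝ) : ℝ := (x ^ φ + y ^ φ) ^ (1 / φ)

namespace gumbelPickands

variable {φ : ℝ}

theorem one_one (φ : ℝ) : gumbelPickands φ 1 1 = 2 ^ (1 / φ) := by
  norm_num [gumbelPickands]

theorem mul_mul (hφ : φ ≠ 0) {c x y : ℝ} (hc : 0 ≤ c) (hx : 0 ≤ x) (hy : 0 ≤ y) :
    gumbelPickands φ (c * x) (c * y) = c * gumbelPickands φ x y := by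
  unfold gumbelPickands
  rw [mul_rpow hc hx, mul_rpow hc hy, ← mul_add,
    mul_rpow (rpow_nonneg hc φ) (add_nonneg (rpow_nonneg hx φ) (rpow_nonneg hy φ)),
    ← rpow_mul hc, mul_one_div_cancel hφ, rpow_one]

theorem hasDerivAt_line (hφ : φ ≠ 0) (a b : ℝ) :
    HasDerivAt (fun h => gumbelPickands φ (1 + a * h) (1 + b * h))
      (2 ^ (1 / φ - 1) * (a + b)) 0 := by
  have hline (c : ℝ) : HasDerivAt (fun h : ℝ => (1 + c * h) ^ φ) (c * φ) 0 := by
    simpa using (((hasDerivAt_id (0 : ℝ)).const_mul c).const_add 1).rpow_const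
      (p := φ) (Or.inl (by simp))
  refine (((hline a).add (hline b)).rpow_const (p := 1 / φ) (Or.inl (by norm_num))).congr_deriv ?_
  norm_num
  field_simp

theorem tendsto_sub_atTop (hφ : φ ≠ 0) (a b : ℝ) :
    Tendsto (fun s => gumbelPickands φ (s + a) (s + b) - 2 ^ (1 / φ) * s) atTop
      (𝓝 (2 ^ (1 / φ - 1) * (a + b))) := by
  refine ((hasDerivAt_line hφ a b).tendsto_slope_zero_right.comp
    tendsto_inv_atTop_nhdsGT_zero).congr' ?_
  filter_upwards [eventually_gt_atTop 0, eventually_ge_atTop (-a), eventually_ge_atTop (-b)]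
    with s hs hsa hsb
  have hscale (c : ℝ) : s + c = s * (1 + c * s⁻¹) := by field_simp
  have hpos (c : ℝ) (hsc : -c ≤ s) : 0 ≤ 1 + c * s⁻¹ := by
    refine (mul_nonneg_iff_of_pos_left hs).1 ?_
    rw [← hscale c]
    linarith
  simp only [Function.comp_def, inv_inv, smul_eq_mul, zero_add, mul_zero, add_zero, one_one]
  rw [hscale a, hscale b, mul_mul hφ hs.le (hpos a hsa) (hpos b hsb)]
  ring

end gumbelPickands

/-- For the Gumbel copula
`Ĉ(u,v) = exp(-((-log u)^φ + (-log v)^φ)^{1/φ})`, `φ ≥ 1` (with `Ĉ(u,v) = 0` when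
`u = 0` or `v = 0`), the tail order is `κ = 2^{1/φ}` with tail order function
`τ(u,v) = (uv)^{2^{1/φ-1}}`: for all `u, v ≥ 0`,
`lim_{t↓0} Ĉ(ut,vt)/t^{2^{1/φ}} = (uv)^{2^{1/φ-1}}`. -/
theorem gumbel_copula_tail_order (φ : ℝ) (hφ : 1 ≤ φ)
    (Chat : ℝ → ℝ → ℝ)
    (hChat : ∀ u v : ℝ, 0 < u → 0 < v →
      Chat u v = Real.exp (-(((-Real.log u) ^ φ + (-Real.log v) ^ φ) ^ (1 / φ))))
    (hChat0 : ∀ u v : ℝ, u = 0 ∨ v = 0 → Chat u v = 0) :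
    ∀ u v : ℝ, 0 ≤ u → 0 ≤ v →
      Tendsto (fun t => Chat (u * t) (v * t) / t ^ ((2:ℝ) ^ (1 / φ)))
        (𝓝[>] (0:ℝ)) (𝓝 ((u * v) ^ ((2:ℝ) ^ (1 / φ - 1)))) := by
  intro u v hu hv
  have hφ0 : φ ≠ 0 := by positivity
  by_cases huv : u = 0 ∨ v = 0
  · have hzero (t : ℝ) : Chat (u * t) (v * t) = 0 :=
      hChat0 _ _ (huv.imp (fun h => by simp [h]) (fun h => by simp [h]))
    rw [mul_eq_zero.2 huv, zero_rpow (rpow_pos_of_pos two_pos _).ne']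
    simpa only [hzero, zero_div] using tendsto_const_nhds
  push Not at huv
  have hu0 : 0 < u := hu.lt_of_ne' huv.1
  have hv0 : 0 < v := hv.lt_of_ne' huv.2
  have hneglog : Tendsto (fun t => -log t) (𝓝[>] 0) atTop :=
    tendsto_neg_atBot_atTop.comp tendsto_log_nhdsGT_zero
  have hlim := (continuous_exp.tendsto _).comp
    ((gumbelPickands.tendsto_sub_atTop hφ0 (-log u) (-log v)).comp hneglog).neg
  convert hlim.congr' ?_ using 2
  · rw [rpow_def_of_pos (mul_pos hu0 hv0), log_mul hu0.ne' hv0.ne']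
    ring_nf
  · filter_upwards [self_mem_nhdsWithin] with t (ht : 0 < t)
    rw [hChat _ _ (mul_pos hu0 ht) (mul_pos hv0 ht), rpow_def_of_pos ht, ← exp_sub,
      log_mul hu0.ne' ht.ne', log_mul hv0.ne' ht.ne']
    simp only [Function.comp_def, gumbelPickands]
    ring_nf
end
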